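/- (Super weight functions are linearly independent.) Fix 0 ≤ k ≤ n, r ∈ {00,10,01,11} and σ ∈ S_n. View F = ℂ(t_1,…,t_k,z_1,…,z_n,ℏ) as a vector space over its subfield ℂ(z_1,…,z_n,ℏ). Then the family of super weight functions {W^{(r)}_{σ,I} : I ∈ I_k} is linearly independent over ℂ(z_1,…,z_n,ℏ); in particular their span has dimension equal to the binomial coefficient C(n,k). -/

import Mathlib

open Finset

noncomputable section

open scoped Classical

/-- Variables `z₁,…,z_n`, `ℏ`. -/
abbrev ZVar (n : ℕ) : Type := Fin n ⊕ Unit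

/-- The factor attached to a pair `a < b` of `t`-indices, with `x = t_b - t_a`:
`1/((t_b-t_a+ℏ)(t_b-t_a))` for `r=00`, `1/(t_b-t_a)` for `r=10` and `r=01`,
`(t_b-t_a+ℏ)/(t_b-t_a)` for `r=11`.  Here `r = 00,10,01,11` is encoded as
`(false,false), (true,false), (false,true), (true,true)`. -/
def tPairFactor (r : Bool × Bool) {F : Type*} [Field F] (x h : F) : F :=
  match r with
  | (false, false) => 1 / ((x + h) * x)
  | (true, false) => 1 / x
  | (false, true) => 1 / x
  | (true, true) => (x + h) / x

/-- `U^{(r)}_I`, as a function of the values `t_a`, `z_b`, `ℏ` in an arbitrary field,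
where `idx : Fin k → Fin n` is the increasing enumeration `a ↦ i_a` of `I`. -/
def superU (r : Bool × Bool) {F : Type*} [Field F] {n k : ℕ} (idx : Fin k → Fin n)
    (t : Fin k → F) (z : Fin n → F) (h : F) : F :=
  (∏ a : Fin k,
    ((∏ b ∈ univ.filter (fun b : Fin n => b < idx a),
        (if r.2 then z b - t a + h else t a - z b + h)) *
     (∏ b ∈ univ.filter (fun b : Fin n => idx a < b), (z b - t a)))) *
  (∏ a : Fin k, ∏ b ∈ univ.filter (fun b : Fin k => a < b), tPairFactor r (t b - t a) h) *
  (if r.2 then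
     h ^ k * (∏ a : Fin n, ∏ b ∈ univ.filter (fun b : Fin n => a < b), (z b - z a + h)) *
       ∏ a : Fin k, ∏ b : Fin n, (z b - t a + h)⁻¹
   else 1)

/-- `W^{(r)}_I = Sym_k U^{(r)}_I`. -/
def superW (r : Bool × Bool) {F : Type*} [Field F] {n k : ℕ} (idx : Fin k → Fin n)
    (t : Fin k → F) (z : Fin n → F) (h : F) : F :=
  ∑ τ : Equiv.Perm (Fin k), superU r idx (t ∘ τ) z h

/-- The increasing enumeration `i_1 < … < i_k` of a `k`-element subset of `{1,…,n}`. -/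
def setIdx {n k : ℕ} (I : Finset (Fin n)) (hI : I.card = k) (a : Fin k) : Fin n :=
  (I.orderIsoOfFin hI a : Fin n)

section AuxWeight

open MvPolynomial

variable {n k : ℕ} {ZK : Type*} [Field ZK]

def genS (n k : ℕ) (ZK : Type*) [Field ZK] (z : Fin n → ZK) (h : ZK) :
    Submonoid (MvPolynomial (Fin k) ZK) :=
  Submonoid.closure
  {p | (∃ a b : Fin k, a ≠ b ∧ p = X b - X a) ∨ (∃ a b : Fin k, p = X b - X a + C h) ∨
       (∃ (a : Fin k) (b : Fin n), p = C (z b) - X a + C h)}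

variable (z : Fin n → ZK) (h : ZK)

lemma evalS_ne_zero (hz : Function.Injective z) (hzh : ∀ a b : Fin n, z b - z a + h ≠ 0)
    {y : Fin k → Fin n} (hy : Function.Injective y) :
    ∀ s ∈ genS n k ZK z h, MvPolynomial.eval (z ∘ y) s ≠ 0 := by
  intro s hs
  induction hs using Submonoid.closure_induction with
  | mem x hx =>
      rcases hx with ⟨a, b, hab, rfl⟩ | ⟨a, b, rfl⟩ | ⟨a, b, rfl⟩
      · simp only [map_sub, eval_X, Function.comp_apply]
        exact sub_ne_zero_of_ne (fun e => hab (hy (hz e)).symm)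
      · simp only [map_add, map_sub, eval_X, eval_C, Function.comp_apply]
        exact hzh (y a) (y b)
      · simp only [map_add, map_sub, eval_X, eval_C, Function.comp_apply]
        exact hzh (y a) b
  | one => simp
  | mul x y' hx hy' ihx ihy => rw [map_mul]; exact mul_ne_zero ihx ihy

def liftHom {F : Type*} [Field F] (ψ : MvPolynomial (Fin k) ZK →+* F)
    (hψ : ∀ s ∈ genS n k ZK z h, ψ s ≠ 0) : Localization (genS n k ZK z h) →+* F :=
  IsLocalization.lift (M := genS n k ZK z h) (fun y => isUnit_iff_ne_zero.mpr (hψ y y.2))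

variable {F : Type*} [Field F] (ψ : MvPolynomial (Fin k) ZK →+* F)
  (hψ : ∀ s ∈ genS n k ZK z h, ψ s ≠ 0)

@[simp] lemma liftHom_algebraMap (p : MvPolynomial (Fin k) ZK) :
    liftHom z h ψ hψ (algebraMap _ _ p) = ψ p :=
  IsLocalization.lift_eq _ p

lemma liftHom_injective (hinj : Function.Injective ψ) : Function.Injective (liftHom z h ψ hψ) := by
  refine (injective_iff_map_eq_zero _).mpr ?_
  intro x hx0
  obtain ⟨⟨p, s⟩, rfl⟩ := IsLocalization.mk'_surjective (genS n k ZK z h) x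
  unfold liftHom at hx0
  rw [IsLocalization.lift_mk'_spec] at hx0
  have hp : p = 0 := hinj (by rw [map_zero]; rwa [mul_zero] at hx0)
  rw [hp]; exact IsLocalization.mk'_zero _

def invS (g : MvPolynomial (Fin k) ZK) : Localization (genS n k ZK z h) :=
  if hg : g ∈ genS n k ZK z h then IsLocalization.mk' _ 1 ⟨g, hg⟩ else 0

lemma liftHom_invS {g : MvPolynomial (Fin k) ZK} (hg : g ∈ genS n k ZK z h) :
    liftHom z h ψ hψ (invS z h g) = (ψ g)⁻¹ := by
  rw [invS, dif_pos hg]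
  unfold liftHom
  exact (IsLocalization.lift_mk'_spec _ _ _ _).mpr
    (by rw [map_one, mul_inv_cancel₀ (hψ g hg)])

lemma mem_genS_sub {a b : Fin k} (hab : a ≠ b) :
    (X b - X a : MvPolynomial (Fin k) ZK) ∈ genS n k ZK z h :=
  Submonoid.subset_closure (Or.inl ⟨a, b, hab, rfl⟩)

lemma mem_genS_subh (a b : Fin k) :
    (X b - X a + C h : MvPolynomial (Fin k) ZK) ∈ genS n k ZK z h :=
  Submonoid.subset_closure (Or.inr (Or.inl ⟨a, b, rfl⟩))

lemma mem_genS_zth (a : Fin k) (b : Fin n) :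
    (C (z b) - X a + C h : MvPolynomial (Fin k) ZK) ∈ genS n k ZK z h :=
  Submonoid.subset_closure (Or.inr (Or.inr ⟨a, b, rfl⟩))

@[simp] lemma liftHom_invS_zth (a : Fin k) (b : Fin n) :
    liftHom z h ψ hψ (invS z h (C (z b) - X a + C h)) = (ψ (C (z b)) - ψ (X a) + ψ (C h))⁻¹ := by
  rw [liftHom_invS z h ψ hψ (mem_genS_zth z h a b), map_add, map_sub]

def pairS (r : Bool × Bool) (x : MvPolynomial (Fin k) ZK) : Localization (genS n k ZK z h) :=
  match r with
  | (false, false) => invS z h (x + C h) * invS z h x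
  | (true, false) => invS z h x
  | (false, true) => invS z h x
  | (true, true) => algebraMap _ _ (x + C h) * invS z h x

lemma liftHom_pairS (r : Bool × Bool) {a b : Fin k} (hab : a ≠ b) :
    liftHom z h ψ hψ (pairS z h r (X b - X a)) = tPairFactor r (ψ (X b) - ψ (X a)) (ψ (C h)) := by
  have h1 := liftHom_invS z h ψ hψ (mem_genS_sub z h hab)
  have h2 := liftHom_invS z h ψ hψ (mem_genS_subh z h a b)
  obtain ⟨r1, r2⟩ := r
  cases r1 <;> cases r2 <;>
    simp only [pairS, tPairFactor, map_mul, h1, h2, liftHom_algebraMap, map_sub, map_add]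
  · rw [one_div, mul_inv]
  · rw [one_div]
  · rw [one_div]
  · rw [div_eq_mul_inv]

def uR (r : Bool × Bool) (idx : Fin k → Fin n) (τ : Equiv.Perm (Fin k)) :
    Localization (genS n k ZK z h) :=
  algebraMap _ _
    (∏ a : Fin k,
      ((∏ b ∈ univ.filter (fun b : Fin n => b < idx a),
          (if r.2 then C (z b) - X (τ a) + C h else X (τ a) - C (z b) + C h)) *
       (∏ b ∈ univ.filter (fun b : Fin n => idx a < b), (C (z b) - X (τ a))))) *
  (∏ a : Fin k, ∏ b ∈ univ.filter (fun b : Fin k => a < b), pairS z h r (X (τ b) - X (τ a))) *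
  (if r.2 then
     algebraMap _ _
       ((C (h ^ k * ∏ a : Fin n, ∏ b ∈ univ.filter (fun b : Fin n => a < b), (z b - z a + h)) :
          MvPolynomial (Fin k) ZK)) *
       ∏ a : Fin k, ∏ b : Fin n, invS z h (C (z b) - X (τ a) + C h)
   else 1)

lemma liftHom_uR (r : Bool × Bool) (idx : Fin k → Fin n) (τ : Equiv.Perm (Fin k)) :
    liftHom z h ψ hψ (uR z h r idx τ) =
      superU r idx ((fun a => ψ (X a)) ∘ τ) (fun b => ψ (C (z b))) (ψ (C h)) := by
  obtain ⟨r1, r2⟩ := r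
  rw [uR, superU, map_mul, map_mul]
  congr 1
  · congr 1
    · rw [liftHom_algebraMap, map_prod]
      refine Finset.prod_congr rfl fun a _ => ?_
      rw [map_mul, map_prod, map_prod]
      cases r2 <;>
        simp [map_sub, map_add, Function.comp_apply]
    · rw [map_prod]
      refine Finset.prod_congr rfl fun a _ => ?_
      rw [map_prod]
      refine Finset.prod_congr rfl fun b hb => ?_
      have hab : a ≠ b := (Finset.mem_filter.mp hb).2.ne
      have : τ a ≠ τ b := fun e => hab (τ.injective e)
      rw [show (X (τ b) - X (τ a) : MvPolynomial (Fin k) ZK) = X (τ b) - X (τ a) from rfl,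
        liftHom_pairS z h ψ hψ (r1, r2) this]
      simp [Function.comp_apply]
  · cases r2
    · simp
    · simp only [if_true]
      rw [map_mul, liftHom_algebraMap]
      congr 1
      · simp only [map_mul, map_pow, map_prod, map_sub, map_add]
      · rw [map_prod (liftHom z h ψ hψ)]
        refine Finset.prod_congr rfl fun a _ => ?_
        rw [map_prod (liftHom z h ψ hψ)]
        refine Finset.prod_congr rfl fun b _ => ?_
        rw [liftHom_invS_zth]
        simp [Function.comp_apply]

lemma tPairFactor_ne_zero (r : Bool × Bool) {F : Type*} [Field F] {x hh : F}
    (hx : x ≠ 0) (hxh : x + hh ≠ 0) : tPairFactor r x hh ≠ 0 := by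
  obtain ⟨r1, r2⟩ := r
  cases r1 <;> cases r2 <;> simp only [tPairFactor]
  · exact one_div_ne_zero (mul_ne_zero hxh hx)
  · exact one_div_ne_zero hx
  · exact one_div_ne_zero hx
  · exact div_ne_zero hxh hx

lemma superU_eq_zero (r : Bool × Bool) {F : Type*} [Field F] (idx : Fin k → Fin n)
    (t : Fin k → F) (zv : Fin n → F) (hv : F)
    (hex : ∃ a : Fin k, ∃ c : Fin n, idx a < c ∧ zv c = t a) : superU r idx t zv hv = 0 := by
  obtain ⟨a, c, h1, h2⟩ := hex
  rw [superU]
  apply mul_eq_zero_of_left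
  apply mul_eq_zero_of_left
  apply Finset.prod_eq_zero (Finset.mem_univ a)
  apply mul_eq_zero_of_right
  exact Finset.prod_eq_zero (i := c) (by simp [h1]) (by rw [h2, sub_self])

lemma superU_diag_ne_zero (r : Bool × Bool) (hz : Function.Injective z)
    (hzh : ∀ a b : Fin n, z b - z a + h ≠ 0) {idx : Fin k → Fin n} (hidx : StrictMono idx) :
    superU r idx (fun a => z (idx a)) z h ≠ 0 := by
  have hh : Fin n → h ≠ 0 := fun a e => by
    have := hzh a a; rw [sub_self, zero_add] at this; exact this e
  rw [superU]
  apply mul_ne_zero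
  apply mul_ne_zero
  · rw [Finset.prod_ne_zero_iff]; intro a _
    apply mul_ne_zero
    · rw [Finset.prod_ne_zero_iff]; intro b _
      split
      · exact hzh (idx a) b
      · exact hzh b (idx a)
    · rw [Finset.prod_ne_zero_iff]; intro b hb
      have hba : idx a < b := (Finset.mem_filter.mp hb).2
      exact sub_ne_zero_of_ne (fun e => (ne_of_gt hba) (hz e))
  · rw [Finset.prod_ne_zero_iff]; intro a _
    rw [Finset.prod_ne_zero_iff]; intro b hb
    have hab : a < b := (Finset.mem_filter.mp hb).2
    have h1 : z (idx b) - z (idx a) ≠ 0 :=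
      sub_ne_zero_of_ne (fun e => (ne_of_gt (hidx hab)) (hz e))
    exact tPairFactor_ne_zero r h1 (hzh (idx a) (idx b))
  · split
    · apply mul_ne_zero
      apply mul_ne_zero
      · rcases Nat.eq_zero_or_pos k with hk | hk
        · subst hk; rw [pow_zero]; exact one_ne_zero
        · exact pow_ne_zero _ (hh (idx ⟨0, hk⟩))
      · rw [Finset.prod_ne_zero_iff]; intro a _
        rw [Finset.prod_ne_zero_iff]; intro b _
        exact hzh a b
      · rw [Finset.prod_ne_zero_iff]; intro a _
        rw [Finset.prod_ne_zero_iff]; intro b _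
        exact inv_ne_zero (hzh (idx a) b)
    · exact one_ne_zero

lemma perm_exists_lt {m : ℕ} (τ : Equiv.Perm (Fin m)) (hτ : τ ≠ 1) : ∃ a, a < τ a := by
  have hne : (univ.filter (fun x : Fin m => τ x ≠ x)).Nonempty := by
    by_contra hcon
    rw [Finset.not_nonempty_iff_eq_empty, Finset.filter_eq_empty_iff] at hcon
    exact hτ (Equiv.ext fun x => not_not.mp (by simpa using hcon (Finset.mem_univ x)))
  refine ⟨Finset.min' _ hne, ?_⟩
  have ha : τ (Finset.min' _ hne) ≠ Finset.min' _ hne :=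
    (Finset.mem_filter.mp (Finset.min'_mem _ hne)).2
  rcases lt_or_gt_of_ne ha with hlt | hgt
  · exfalso
    have hmem : τ (Finset.min' _ hne) ∈ univ.filter (fun x : Fin m => τ x ≠ x) :=
      Finset.mem_filter.mpr ⟨Finset.mem_univ _, fun e => ha (τ.injective e)⟩
    exact absurd (Finset.min'_le _ _ hmem) (not_le.mpr hlt)
  · exact hgt

lemma dominance {f g : Fin k → Fin n} (hf : Monotone f) (hg : Monotone g) (τ : Equiv.Perm (Fin k))
    (hle : ∀ a, g (τ a) ≤ f a) (a : Fin k) : g a ≤ f a := by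
  by_contra hgt
  push_neg at hgt
  have himg : (Finset.Iic a).image τ ⊆ univ.filter (fun d => g d ≤ f a) := by
    intro d hd
    obtain ⟨c, hc, rfl⟩ := Finset.mem_image.mp hd
    exact Finset.mem_filter.mpr ⟨Finset.mem_univ _, (hle c).trans (hf (Finset.mem_Iic.mp hc))⟩
  have hsub : univ.filter (fun d => g d ≤ f a) ⊆ Finset.Iio a := by
    intro d hd
    rw [Finset.mem_Iio]
    by_contra hda
    push_neg at hda
    exact absurd ((Finset.mem_filter.mp hd).2) (not_le.mpr (lt_of_lt_of_le hgt (hg hda)))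
  have h1 : (Finset.Iic a).card ≤ (Finset.Iio a).card := by
    calc (Finset.Iic a).card = ((Finset.Iic a).image τ).card :=
          (Finset.card_image_of_injective _ τ.injective).symm
    _ ≤ _ := Finset.card_le_card (himg.trans hsub)
  rw [Fin.card_Iic, Fin.card_Iio] at h1
  omega

lemma setIdx_strictMono {I : Finset (Fin n)} (hI : I.card = k) : StrictMono (setIdx I hI) := by
  intro a b hab
  exact (I.orderIsoOfFin hI).lt_iff_lt.mpr hab

lemma setIdx_mem {I : Finset (Fin n)} (hI : I.card = k) (a : Fin k) : setIdx I hI a ∈ I :=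
  (I.orderIsoOfFin hI a).2

lemma eq_of_setIdx_eq {I J : Finset (Fin n)} (hI : I.card = k) (hJ : J.card = k)
    (hIJ : ∀ a, setIdx I hI a = setIdx J hJ a) : I = J := by
  have himg : ∀ (K : Finset (Fin n)) (hK : K.card = k), K = univ.image (setIdx K hK) := by
    intro K hK
    ext x
    simp only [Finset.mem_image, Finset.mem_univ, true_and]
    constructor
    · intro hx
      obtain ⟨a, ha⟩ := (K.orderIsoOfFin hK).surjective ⟨x, hx⟩
      exact ⟨a, by rw [setIdx, ha]⟩
    · rintro ⟨a, rfl⟩; exact setIdx_mem hK a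
  rw [himg I hI, himg J hJ]
  exact Finset.image_congr (fun a _ => hIJ a)

theorem general_li {TK : Type*} [Field TK]
    [Algebra (MvPolynomial (Fin k) ZK) TK] [IsFractionRing (MvPolynomial (Fin k) ZK) TK]
    [Algebra ZK TK] [IsScalarTower ZK (MvPolynomial (Fin k) ZK) TK]
    (hkn : k ≤ n) (r : Bool × Bool) (hz : Function.Injective z)
    (hzh : ∀ a b : Fin n, z b - z a + h ≠ 0) :
    LinearIndependent ZK (fun I : {s : Finset (Fin n) // s.card = k} =>
      superW r (setIdx I.1 I.2)
        (fun a => algebraMap (MvPolynomial (Fin k) ZK) TK (X a))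
        (fun b => algebraMap ZK TK (z b)) (algebraMap ZK TK h)) := by
  have hcast : ∀ c : ZK, algebraMap ZK TK c = algebraMap (MvPolynomial (Fin k) ZK) TK (C c) :=
    fun c => by
      rw [IsScalarTower.algebraMap_apply ZK (MvPolynomial (Fin k) ZK) TK,
        MvPolynomial.algebraMap_eq]
  set ψT := algebraMap (MvPolynomial (Fin k) ZK) TK with hψTdef
  have hinjT : Function.Injective ψT := IsFractionRing.injective _ _
  have hy0 : Function.Injective (Fin.castLE hkn) := Fin.castLE_injective hkn
  have hψT : ∀ s ∈ genS n k ZK z h, ψT s ≠ 0 := by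
    intro s hs
    have hs0 : s ≠ 0 := fun e => evalS_ne_zero z h hz hzh hy0 s hs (by rw [e, map_zero])
    exact fun e => hs0 (hinjT (by rw [e, map_zero]))
  have key : ∀ (I : Finset (Fin n)) (hI : I.card = k),
      liftHom z h ψT hψT (∑ τ : Equiv.Perm (Fin k), uR z h r (setIdx I hI) τ) =
        superW r (setIdx I hI) (fun a => ψT (X a))
          (fun b => algebraMap ZK TK (z b)) (algebraMap ZK TK h) := by
    intro I hI
    rw [map_sum, superW]
    refine Finset.sum_congr rfl fun τ _ => ?_
    rw [liftHom_uR]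
    simp only [hcast]
  rw [Fintype.linearIndependent_iff]
  intro g hrel
  by_contra hcon
  push_neg at hcon
  obtain ⟨I₁, hI₁⟩ := hcon
  set supp := univ.filter (fun I : {s : Finset (Fin n) // s.card = k} => g I ≠ 0) with hsupp
  have hsne : supp.Nonempty := ⟨I₁, Finset.mem_filter.mpr ⟨Finset.mem_univ _, hI₁⟩⟩
  obtain ⟨I₀, hI₀mem, hI₀max⟩ :=
    Finset.exists_max_image supp (fun I => ∑ a : Fin k, (setIdx I.1 I.2 a : ℕ)) hsne
  have hrelR : (∑ I : {s : Finset (Fin n) // s.card = k},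
      algebraMap (MvPolynomial (Fin k) ZK) (Localization (genS n k ZK z h)) (C (g I)) *
        (∑ τ : Equiv.Perm (Fin k), uR z h r (setIdx I.1 I.2) τ)) = 0 := by
    apply liftHom_injective z h ψT hψT hinjT
    rw [map_zero, map_sum, ← hrel]
    refine Finset.sum_congr rfl fun I _ => ?_
    rw [map_mul, liftHom_algebraMap, key I.1 I.2, Algebra.smul_def]
    simp only [hcast]
  set evJ := MvPolynomial.eval (z ∘ setIdx I₀.1 I₀.2) with hevJdef
  have hyJ : Function.Injective (setIdx I₀.1 I₀.2) := (setIdx_strictMono I₀.2).injective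
  have hψJ : ∀ s ∈ genS n k ZK z h, evJ s ≠ 0 := evalS_ne_zero z h hz hzh hyJ
  have hval : ∀ I : {s : Finset (Fin n) // s.card = k},
      liftHom z h evJ hψJ (∑ τ : Equiv.Perm (Fin k), uR z h r (setIdx I.1 I.2) τ) =
        ∑ τ : Equiv.Perm (Fin k),
          superU r (setIdx I.1 I.2) ((fun a => z (setIdx I₀.1 I₀.2 a)) ∘ τ) z h := by
    intro I
    rw [map_sum]
    refine Finset.sum_congr rfl fun τ _ => ?_
    rw [liftHom_uR]
    simp only [hevJdef, eval_X, eval_C, Function.comp_apply]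
  have hsum0 : (∑ I : {s : Finset (Fin n) // s.card = k}, g I *
      ∑ τ : Equiv.Perm (Fin k),
        superU r (setIdx I.1 I.2) ((fun a => z (setIdx I₀.1 I₀.2 a)) ∘ τ) z h) = 0 := by
    have h1 := congrArg (liftHom z h evJ hψJ) hrelR
    rw [map_zero, map_sum] at h1
    rw [← h1]
    refine Finset.sum_congr rfl fun I _ => ?_
    rw [map_mul, liftHom_algebraMap, hval I, hevJdef, eval_C]
  rw [Finset.sum_eq_single I₀] at hsum0
  · have hVdiag : (∑ τ : Equiv.Perm (Fin k),
        superU r (setIdx I₀.1 I₀.2) ((fun a => z (setIdx I₀.1 I₀.2 a)) ∘ τ) z h) ≠ 0 := by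
      have hdiag : (∑ τ : Equiv.Perm (Fin k),
          superU r (setIdx I₀.1 I₀.2) ((fun a => z (setIdx I₀.1 I₀.2 a)) ∘ τ) z h) =
          superU r (setIdx I₀.1 I₀.2) (fun a => z (setIdx I₀.1 I₀.2 a)) z h := by
        rw [Finset.sum_eq_single (1 : Equiv.Perm (Fin k))]
        · rfl
        · intro τ _ hτ1
          obtain ⟨a, ha⟩ := perm_exists_lt τ hτ1
          exact superU_eq_zero r _ _ _ _
            ⟨a, setIdx I₀.1 I₀.2 (τ a), (setIdx_strictMono I₀.2) ha, rfl⟩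
        · intro habs; exact absurd (Finset.mem_univ _) habs
      rw [hdiag]
      exact superU_diag_ne_zero z h r hz hzh (setIdx_strictMono I₀.2)
    have hg0 : g I₀ = 0 := by
      rcases mul_eq_zero.mp hsum0 with h' | h'
      · exact h'
      · exact absurd h' hVdiag
    exact (Finset.mem_filter.mp hI₀mem).2 hg0
  · intro I _ hne
    by_cases hgI : g I = 0
    · rw [hgI, zero_mul]
    · have hImem : I ∈ supp := Finset.mem_filter.mpr ⟨Finset.mem_univ _, hgI⟩
      have hV : (∑ τ : Equiv.Perm (Fin k),
          superU r (setIdx I.1 I.2) ((fun a => z (setIdx I₀.1 I₀.2 a)) ∘ τ) z h) = 0 := by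
        apply Finset.sum_eq_zero
        intro τ _
        by_cases hdom : ∀ a, setIdx I₀.1 I₀.2 (τ a) ≤ setIdx I.1 I.2 a
        · exfalso
          have hall : ∀ a, setIdx I₀.1 I₀.2 a ≤ setIdx I.1 I.2 a :=
            dominance (setIdx_strictMono I.2).monotone (setIdx_strictMono I₀.2).monotone τ hdom
          have hsumle : (∑ a : Fin k, (setIdx I₀.1 I₀.2 a : ℕ)) ≤
              ∑ a : Fin k, (setIdx I.1 I.2 a : ℕ) :=
            Finset.sum_le_sum (fun a _ => hall a)
          have hmax := hI₀max I hImem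
          have heq : ∀ a ∈ (univ : Finset (Fin k)),
              ((setIdx I₀.1 I₀.2 a : ℕ)) = setIdx I.1 I.2 a :=
            (Finset.sum_eq_sum_iff_of_le (f := fun a => (setIdx I₀.1 I₀.2 a : ℕ)) (fun a _ => hall a)).mp (le_antisymm hsumle hmax)
          exact hne (Subtype.ext (eq_of_setIdx_eq I.2 I₀.2
            (fun a => Fin.ext (heq a (Finset.mem_univ a)).symm)))
        · push_neg at hdom
          obtain ⟨a, ha⟩ := hdom
          exact superU_eq_zero r _ _ _ _ ⟨a, setIdx I₀.1 I₀.2 (τ a), ha, rfl⟩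
      rw [hV, mul_zero]
  · intro habs; exact absurd (Finset.mem_univ _) habs

end AuxWeight

section

/- `ZK` is the field `ℂ(z₁,…,z_n,ℏ)` and `TK` is the field `ℂ(t₁,…,t_k,z₁,…,z_n,ℏ)`,
realized as the field of rational functions in `t₁,…,t_k` with coefficients in
`ℂ(z₁,…,z_n,ℏ)`; in particular `TK` is a vector space over its subfield `ZK`. -/
variable {n k : ℕ} {ZK TK : Type*} [Field ZK] [Field TK]
  [Algebra (MvPolynomial (ZVar n) ℂ) ZK] [IsFractionRing (MvPolynomial (ZVar n) ℂ) ZK]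
  [Algebra (MvPolynomial (Fin k) ZK) TK] [IsFractionRing (MvPolynomial (Fin k) ZK) TK]
  [Algebra ZK TK] [IsScalarTower ZK (MvPolynomial (Fin k) ZK) TK]

/-- The super weight function
`W^{(r)}_{σ,I} = W^{(r)}_{σ⁻¹(I)}(t₁,…,t_k,z_{σ(1)},…,z_{σ(n)},ℏ)` as an element
of `TK = ℂ(t₁,…,t_k,z₁,…,z_n,ℏ)`. -/
def weightW (r : Bool × Bool) (σ : Equiv.Perm (Fin n))
    (I : Finset (Fin n)) (hI : I.card = k) : TK :=
  superW r (setIdx (I.map σ.symm.toEmbedding) (by rw [Finset.card_map]; exact hI))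
    (fun a => algebraMap (MvPolynomial (Fin k) ZK) TK (MvPolynomial.X a))
    (fun b => algebraMap ZK TK
      (algebraMap (MvPolynomial (ZVar n) ℂ) ZK (MvPolynomial.X (Sum.inl (σ b)))))
    (algebraMap ZK TK
      (algebraMap (MvPolynomial (ZVar n) ℂ) ZK (MvPolynomial.X (Sum.inr ()))))

/-- super weight functions are linearly independent: the family
`{W^{(r)}_{σ,I} : I ∈ I_k}` is linearly independent over `ℂ(z₁,…,z_n,ℏ)`;
in particular its span has dimension `C(n,k)`. -/
theorem superWeight_linearIndependent (hkn : k ≤ n) (r : Bool × Bool)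
    (σ : Equiv.Perm (Fin n)) :
    LinearIndependent ZK
        (fun I : {s : Finset (Fin n) // s.card = k} => (weightW (ZK := ZK) r σ I.1 I.2 : TK)) ∧
      Module.finrank ZK
        (Submodule.span ZK
          (Set.range fun I : {s : Finset (Fin n) // s.card = k} =>
            (weightW (ZK := ZK) r σ I.1 I.2 : TK))) =
        n.choose k := by
  have hinjZ : Function.Injective (algebraMap (MvPolynomial (ZVar n) ℂ) ZK) :=
    IsFractionRing.injective _ _
  set zz : Fin n → ZK := fun b =>
    algebraMap (MvPolynomial (ZVar n) ℂ) ZK (MvPolynomial.X (Sum.inl (σ b))) with hzz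
  set hh : ZK := algebraMap (MvPolynomial (ZVar n) ℂ) ZK (MvPolynomial.X (Sum.inr ())) with hhh
  have hzinj : Function.Injective zz := by
    intro a b e
    exact σ.injective (Sum.inl_injective (MvPolynomial.X_injective (hinjZ e)))
  have hzh : ∀ a b : Fin n, zz b - zz a + hh ≠ 0 := by
    intro a b
    have hrw : zz b - zz a + hh = algebraMap (MvPolynomial (ZVar n) ℂ) ZK
        (MvPolynomial.X (Sum.inl (σ b)) - MvPolynomial.X (Sum.inl (σ a)) +
          MvPolynomial.X (Sum.inr ())) := by
      rw [map_add, map_sub]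
    rw [hrw]
    intro e
    have hp0 : (MvPolynomial.X (Sum.inl (σ b)) - MvPolynomial.X (Sum.inl (σ a)) +
        MvPolynomial.X (Sum.inr ()) : MvPolynomial (ZVar n) ℂ) = 0 :=
      hinjZ (by rw [e, map_zero])
    have h1 := congrArg
      (MvPolynomial.eval (Sum.elim (fun _ => (0 : ℂ)) (fun _ => (1 : ℂ)))) hp0
    simp only [map_add, map_sub, MvPolynomial.eval_X, Sum.elim_inl, Sum.elim_inr,
      map_zero] at h1
    norm_num at h1
  have hLI0 := general_li (ZK := ZK) zz hh (TK := TK) hkn r hzinj hzh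
  let e : {s : Finset (Fin n) // s.card = k} ≃ {s : Finset (Fin n) // s.card = k} :=
  { toFun := fun I => ⟨I.1.map σ.symm.toEmbedding, by rw [Finset.card_map]; exact I.2⟩
    invFun := fun I => ⟨I.1.map σ.toEmbedding, by rw [Finset.card_map]; exact I.2⟩
    left_inv := fun I => Subtype.ext (by ext x; simp)
    right_inv := fun I => Subtype.ext (by ext x; simp) }
  have hcomp : (fun I : {s : Finset (Fin n) // s.card = k} =>
      (weightW (ZK := ZK) r σ I.1 I.2 : TK)) =
      (fun I : {s : Finset (Fin n) // s.card = k} =>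
        superW r (setIdx I.1 I.2)
          (fun a => algebraMap (MvPolynomial (Fin k) ZK) TK (MvPolynomial.X a))
          (fun b => algebraMap ZK TK (zz b)) (algebraMap ZK TK hh)) ∘ e := by
    funext I
    rfl
  have hLI : LinearIndependent ZK
      (fun I : {s : Finset (Fin n) // s.card = k} => (weightW (ZK := ZK) r σ I.1 I.2 : TK)) := by
    rw [hcomp]
    exact hLI0.comp e e.injective
  refine ⟨hLI, ?_⟩
  rw [finrank_span_eq_card hLI, Fintype.card_finset_len, Fintype.card_fin]


end
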